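/- (Scott continuity of Kleisli extension in its function argument.) Let X and Y be countable sets and let F be a nonempty family of functions X → C(Y) that is directed with respect to the order f ⊑ g iff g(x) ⊆ f(x) for all x ∈ X. Let G : X → set of distributions be the pointwise intersection G(x) := ∩_{f∈F} f(x). Then for every S ∈ C(X), G†(S) = ∩_{f∈F} f†(S), where the Kleisli extension formula is applied to G pointwise (with G_⊥(⊥) := ↑{δ_⊥}). -/

import Mathlib

open scoped Classical
open Filter Topology

namespace DOL

/-- A discrete probability distribution on `X`: pointwise nonnegative with total mass 1. -/
def IsDist {X : Type*} (μ : X → ℝ) : Prop := (∀ x, 0 ≤ μ x) ∧ HasSum μ 1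

/-- The point-mass (Dirac) distribution at `x`. -/
noncomputable def dirac {X : Type*} (x : X) : X → ℝ := fun y => if y = x then 1 else 0

/-- The order `⊑_D` on distributions over `X_⊥ = Option X` (with `⊥ = none`):
pointwise comparison at proper states only. -/
def dle {X : Type*} (μ ν : Option X → ℝ) : Prop := ∀ x : X, μ (some x) ≤ ν (some x)

/-- Up-closure of a set of distributions over `X_⊥` (within `D(X_⊥)`). -/
def upClo {X : Type*} (S : Set (Option X → ℝ)) : Set (Option X → ℝ) :=
  {ν | IsDist ν ∧ ∃ μ ∈ S, dle μ ν}

/-- Convexity of a set of functions, with pointwise convex combinations. -/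
def IsConvexSet {X : Type*} (S : Set (X → ℝ)) : Prop :=
  ∀ μ ∈ S, ∀ ν ∈ S, ∀ p : ℝ, 0 ≤ p → p ≤ 1 →
    (fun x => p * μ x + (1 - p) * ν x) ∈ S

/-- Membership in `C(X)`: nonempty, consisting of distributions over `X_⊥`,
convex, (topologically) closed, and up-closed. -/
def memC {X : Type*} (S : Set (Option X → ℝ)) : Prop :=
  S.Nonempty ∧ (∀ μ ∈ S, IsDist μ) ∧ IsConvexSet S ∧ IsClosed S ∧ upClo S = S

/-- Bottom-lifting of a set-valued map: `f_⊥(⊥) = ↑{δ_⊥}`. -/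
noncomputable def fbot {X Y : Type*} (f : X → Set (Option Y → ℝ)) :
    Option X → Set (Option Y → ℝ) :=
  fun x => match x with
  | some x => f x
  | none => upClo {dirac (none : Option Y)}

/-- Kleisli extension: all convex mixtures `∑_{x ∈ supp μ} μ(x)·ν_x` with `μ ∈ S`
and `ν_x ∈ f_⊥(x)` on the support of `μ`. -/
noncomputable def kleisli {X Y : Type*} (f : X → Set (Option Y → ℝ))
    (S : Set (Option X → ℝ)) : Set (Option Y → ℝ) :=
  {ξ | ∃ μ ∈ S, ∃ ν : Option X → (Option Y → ℝ),
    (∀ x, 0 < μ x → ν x ∈ fbot f x) ∧ (∀ y, ξ y = ∑' x, μ x * ν x y)}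

/-- Probabilistic choice between sets of distributions. -/
def pchoice {X : Type*} (p : ℝ) (S T : Set (Option X → ℝ)) : Set (Option X → ℝ) :=
  {ξ | ∃ μ ∈ S, ∃ ν ∈ T, ξ = fun x => p * μ x + (1 - p) * ν x}

/-- The monad unit `η(x) = ↑{δ_x}`. -/
noncomputable def eta {X : Type*} (x : X) : Set (Option X → ℝ) := upClo {dirac (some x)}

/-- The loop characteristic functional. -/
noncomputable def Phi {St : Type*} (c : St → Set (Option St → ℝ)) (b : St → Bool)
    (f : St → Set (Option St → ℝ)) : St → Set (Option St → ℝ) :=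
  fun σ => if b σ then kleisli f (c σ) else upClo {dirac (some σ)}

/-
Fix `ξ ∈ ⋂_{f ∈ F} f†(S)`. For each `f ∈ F`, the pairs `(μ, (ν_x)_{x ∈ X})` with `μ ∈ S`,
`ν_x ∈ f(x)` and `∑_{x ∈ X} μ(x) ν_x ≤ ξ` form a nonempty closed subset of the compact cube
`[0,1]^(X_⊥) × ([0,1]^(Y_⊥))^X`, and these subsets decrease along the directed family `F`. By Cantor's
intersection theorem some pair lies in all of them, i.e. `ν_x ∈ G(x)` for every `x`. The mass that
`ξ` still lacks is exactly `μ(⊥)`, and it is placed at `⊥`, where `G_⊥` allows any distribution.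
-/

section Distributions

variable {Z : Type*}

lemma IsDist.le_one {μ : Z → ℝ} (h : IsDist μ) (z : Z) : μ z ≤ 1 :=
  le_hasSum h.2 z fun z' _ => h.1 z'

lemma isDist_dirac (z : Z) : IsDist (dirac z) := by
  refine ⟨fun y => ?_, ?_⟩
  · unfold dirac; split <;> norm_num
  · exact hasSum_ite_eq z 1

lemma mem_upClo_dirac_none_iff {ν : Option Z → ℝ} :
    ν ∈ upClo {dirac (none : Option Z)} ↔ IsDist ν :=
  ⟨fun h => h.1, fun h => ⟨h, dirac none, rfl, fun y => by simpa [dirac] using h.1 (some y)⟩⟩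

lemma hasSum_option {f : Option Z → ℝ} {a : ℝ} (h : HasSum (fun z => f (some z)) a) :
    HasSum f (f none + a) := by
  have hsome : HasSum (fun o : Option Z => o.elim 0 fun z => f (some z)) a :=
    ((Option.some_injective Z).hasSum_iff fun o ho => by
      cases o
      · rfl
      · exact absurd ⟨_, rfl⟩ ho).mp h
  convert (hasSum_ite_eq none (f none)).add hsome using 1
  funext o
  cases o <;> simp

lemma IsDist.hasSum_some {μ : Option Z → ℝ} (h : IsDist μ) :
    HasSum (fun z => μ (some z)) (1 - μ none) := by
  have hsome := (h.2.summable.comp_injective (Option.some_injective Z)).hasSum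
  rw [h.2.unique (hasSum_option hsome), add_sub_cancel_left]
  exact hsome

lemma memC.nonempty {S : Set (Option Z → ℝ)} (h : memC S) : S.Nonempty := h.1

lemma memC.isDist {S : Set (Option Z → ℝ)} (h : memC S) : ∀ μ ∈ S, IsDist μ := h.2.1

lemma memC.isClosed {S : Set (Option Z → ℝ)} (h : memC S) : IsClosed S := h.2.2.2.1

end Distributions

section Mixture

variable {A B : Type*} {μ : A → ℝ} {ν : A → B → ℝ}

lemma summable_mul_apply (hμ0 : ∀ a, 0 ≤ μ a) (hμ : Summable μ) (hν : ∀ a, IsDist (ν a))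
    (b : B) : Summable fun a => μ a * ν a b :=
  hμ.of_nonneg_of_le (fun a => mul_nonneg (hμ0 a) ((hν a).1 b))
    fun a => mul_le_of_le_one_right (hμ0 a) ((hν a).le_one b)

lemma hasSum_mixture {m : ℝ} (hμ0 : ∀ a, 0 ≤ μ a) (hμ : HasSum μ m) (hν : ∀ a, IsDist (ν a)) :
    HasSum (fun b => ∑' a, μ a * ν a b) m := by
  have hrow : ∀ a, HasSum (fun b => μ a * ν a b) (μ a) := fun a => by
    simpa using (hν a).2.mul_left (μ a)
  have hsum : Summable fun p : A × B => μ p.1 * ν p.1 p.2 :=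
    (summable_prod_of_nonneg fun p => mul_nonneg (hμ0 _) ((hν _).1 _)).2
      ⟨fun a => (hrow a).summable, by simpa [(hrow _).tsum_eq] using hμ.summable⟩
  have htotal : HasSum (fun p : A × B => μ p.1 * ν p.1 p.2) m := by
    rw [hμ.unique (hsum.hasSum.prod_fiberwise hrow)]
    exact hsum.hasSum
  exact ((Equiv.prodComm B A).hasSum_iff.mpr htotal).prod_fiberwise fun b =>
    (summable_mul_apply hμ0 hμ.summable hν b).hasSum

end Mixture

section Kleisli

variable {X Y : Type*} {f g : X → Set (Option Y → ℝ)} {S : Set (Option X → ℝ)} {ξ : Option Y → ℝ}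

lemma fbot_mono (h : ∀ x, f x ⊆ g x) : ∀ o, fbot f o ⊆ fbot g o
  | none => subset_rfl
  | some x => h x

lemma kleisli_mono (h : ∀ x, f x ⊆ g x) : kleisli f S ⊆ kleisli g S :=
  fun _ ⟨μ, hμS, ν, hν, hξ⟩ => ⟨μ, hμS, ν, fun o ho => fbot_mono h o (hν o ho), hξ⟩

lemma fbot_nonempty (hf : ∀ x, (f x).Nonempty) : ∀ o, (fbot f o).Nonempty
  | none => ⟨dirac none, mem_upClo_dirac_none_iff.2 (isDist_dirac none)⟩
  | some x => hf x

lemma isDist_of_mem_fbot (hf : ∀ x, ∀ ν ∈ f x, IsDist ν) {ν : Option Y → ℝ} :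
    ∀ {o}, ν ∈ fbot f o → IsDist ν
  | none, h => h.1
  | some x, h => hf x ν h

lemma exists_total_witness_of_mem_kleisli (hS : ∀ μ ∈ S, IsDist μ) (hf : ∀ x, (f x).Nonempty)
    (h : ξ ∈ kleisli f S) :
    ∃ μ ∈ S, ∃ ν : Option X → Option Y → ℝ,
      (∀ o, ν o ∈ fbot f o) ∧ ∀ y, ξ y = ∑' o, μ o * ν o y := by
  obtain ⟨μ, hμS, ν, hν, hξ⟩ := h
  refine ⟨μ, hμS, fun o => if 0 < μ o then ν o else (fbot_nonempty hf o).some,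
    fun o => ?_, fun y => (hξ y).trans (tsum_congr fun o => ?_)⟩
  · dsimp only
    split_ifs with ho
    exacts [hν o ho, (fbot_nonempty hf o).some_mem]
  · dsimp only
    split_ifs with ho
    · rfl
    · simp [le_antisymm (not_lt.1 ho) ((hS μ hμS).1 o)]

lemma isDist_of_mem_kleisli (hS : ∀ μ ∈ S, IsDist μ) (hfne : ∀ x, (f x).Nonempty)
    (hf : ∀ x, ∀ ν ∈ f x, IsDist ν) (h : ξ ∈ kleisli f S) : IsDist ξ := by
  obtain ⟨μ, hμS, ν, hν, hξ⟩ := exists_total_witness_of_mem_kleisli hS hfne h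
  have hνD : ∀ o, IsDist (ν o) := fun o => isDist_of_mem_fbot hf (hν o)
  rw [funext hξ]
  exact ⟨fun y => tsum_nonneg fun o => mul_nonneg ((hS μ hμS).1 o) ((hνD o).1 y),
    hasSum_mixture (hS μ hμS).1 (hS μ hμS).2 hνD⟩

/-- The bound is imposed on finite partial sums so that the set is closed in the product topology;
the mass missing below `ξ` is put at `⊥` afterwards. -/
def dominatedMixtures (f : X → Set (Option Y → ℝ)) (S : Set (Option X → ℝ))
    (ξ : Option Y → ℝ) : Set ((Option X → ℝ) × (X → Option Y → ℝ)) :=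
  {p | p.1 ∈ S ∧ (∀ x, p.2 x ∈ f x) ∧ ∀ y (s : Finset X), ∑ x ∈ s, p.1 (some x) * p.2 x y ≤ ξ y}

lemma dominatedMixtures_mono (h : ∀ x, f x ⊆ g x) :
    dominatedMixtures f S ξ ⊆ dominatedMixtures g S ξ :=
  fun _ ⟨hS, hf, hle⟩ => ⟨hS, fun x => h x (hf x), hle⟩

lemma isClosed_dominatedMixtures (hS : IsClosed S) (hf : ∀ x, IsClosed (f x)) :
    IsClosed (dominatedMixtures f S ξ) := by
  simp only [dominatedMixtures, Set.ofPred_and, Set.ofPred_forall]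
  refine (hS.preimage continuous_fst).inter
    ((isClosed_iInter fun x => (hf x).preimage (by fun_prop)).inter
      (isClosed_iInter fun y => isClosed_iInter fun s => isClosed_le (by fun_prop) (by fun_prop)))

lemma isCompact_dominatedMixtures (hS : ∀ μ ∈ S, IsDist μ) (hSc : IsClosed S)
    (hf : ∀ x, ∀ ν ∈ f x, IsDist ν) (hfc : ∀ x, IsClosed (f x)) :
    IsCompact (dominatedMixtures f S ξ) := by
  refine ((isCompact_univ_pi fun _ => isCompact_Icc (a := (0 : ℝ)) (b := 1)).prod
    (isCompact_univ_pi fun _ => isCompact_univ_pi fun _ => isCompact_Icc (a := (0 : ℝ)) (b := 1)))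
    |>.of_isClosed_subset (isClosed_dominatedMixtures hSc hfc) ?_
  rintro ⟨μ, ν⟩ ⟨hμS, hνf, -⟩
  have hμ := hS μ hμS
  have hν := fun x => hf x _ (hνf x)
  exact ⟨fun o _ => ⟨hμ.1 o, hμ.le_one o⟩, fun x _ y _ => ⟨(hν x).1 y, (hν x).le_one y⟩⟩

lemma dominatedMixtures_nonempty (hS : ∀ μ ∈ S, IsDist μ) (hfne : ∀ x, (f x).Nonempty)
    (hf : ∀ x, ∀ ν ∈ f x, IsDist ν) (h : ξ ∈ kleisli f S) :
    (dominatedMixtures f S ξ).Nonempty := by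
  obtain ⟨μ, hμS, ν, hν, hξ⟩ := exists_total_witness_of_mem_kleisli hS hfne h
  have hμ := hS μ hμS
  have hνD : ∀ o, IsDist (ν o) := fun o => isDist_of_mem_fbot hf (hν o)
  refine ⟨(μ, fun x => ν (some x)), hμS, fun x => hν (some x), fun y s => ?_⟩
  rw [hξ y]
  simpa using (summable_mul_apply hμ.1 hμ.2.summable hνD y).sum_le_tsum
    (s.map Function.Embedding.some) fun o _ => mul_nonneg (hμ.1 o) ((hνD o).1 y)

lemma mem_kleisli_of_mem_dominatedMixtures (hS : ∀ μ ∈ S, IsDist μ)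
    (hf : ∀ x, ∀ ν ∈ f x, IsDist ν) (hξ : IsDist ξ) {p} (hp : p ∈ dominatedMixtures f S ξ) :
    ξ ∈ kleisli f S := by
  obtain ⟨⟨μ, ν⟩, hμS, hνf, hle⟩ := p, hp
  have hμ := hS μ hμS
  have hν : ∀ x, IsDist (ν x) := fun x => hf x _ (hνf x)
  have hμsome := hμ.hasSum_some
  set T : Option Y → ℝ := fun y => ∑' x, μ (some x) * ν x y
  have hsumT : ∀ y, Summable fun x => μ (some x) * ν x y :=
    summable_mul_apply (fun x => hμ.1 _) hμsome.summable hν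
  have hT : HasSum T (1 - μ none) := hasSum_mixture (fun x => hμ.1 _) hμsome hν
  have hr0 : ∀ y, 0 ≤ ξ y - T y := fun y => sub_nonneg.2 ((hsumT y).tsum_le_of_sum_le (hle y))
  have hr : HasSum (fun y => ξ y - T y) (μ none) := by simpa using hξ.2.sub hT
  refine ⟨μ, hμS, fun o => o.elim (fun y => (ξ y - T y) / μ none) ν, ?_, fun y => ?_⟩
  · rintro (_ | x) hpos
    · refine mem_upClo_dirac_none_iff.2 ⟨fun y => div_nonneg (hr0 y) hpos.le, ?_⟩
      simpa [div_self hpos.ne'] using hr.div_const (μ none)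
    · exact hνf x
  · rw [(hasSum_option (hsumT y).hasSum).tsum_eq]
    dsimp only [Option.elim]
    by_cases h0 : μ none = 0
    · have hr_zero := congrFun ((hasSum_zero_iff_of_nonneg hr0).1 (h0 ▸ hr)) y
      simp only [Pi.zero_apply] at hr_zero
      rw [h0, zero_mul, zero_add]
      linarith
    · rw [mul_div_cancel₀ _ h0]
      ring

lemma iInter_dominatedMixtures_subset {F : Set (X → Set (Option Y → ℝ))} [Nonempty F] :
    ⋂ f : F, dominatedMixtures f.1 S ξ ⊆ dominatedMixtures (fun x => ⋂ f ∈ F, f x) S ξ :=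
  fun p hp => by
    rw [Set.mem_iInter] at hp
    obtain ⟨f₀⟩ := ‹Nonempty F›
    exact ⟨(hp f₀).1, fun x => Set.mem_iInter₂.2 fun f hf => (hp ⟨f, hf⟩).2.1 x, (hp f₀).2.2⟩

end Kleisli

theorem kleisli_scott_continuous_general {X Y : Type*}
    (F : Set (X → Set (Option Y → ℝ))) (hne : F.Nonempty)
    (hmem : ∀ f ∈ F, ∀ x, memC (f x))
    (hdir : ∀ f ∈ F, ∀ g ∈ F, ∃ h ∈ F, (∀ x, h x ⊆ f x) ∧ (∀ x, h x ⊆ g x))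
    (S : Set (Option X → ℝ)) (hS : memC S) :
    kleisli (fun x : X => ⋂ f ∈ F, f x) S = ⋂ f ∈ F, kleisli f S := by
  obtain ⟨f₀, hf₀⟩ := hne
  refine Set.Subset.antisymm
    (Set.subset_iInter₂ fun f hf => kleisli_mono fun x => Set.biInter_subset_of_mem hf)
    fun ξ hξ => ?_
  rw [Set.mem_iInter₂] at hξ
  have hfD : ∀ f ∈ F, ∀ x, ∀ ν ∈ f x, IsDist ν := fun f hf x => (hmem f hf x).isDist
  have : Nonempty F := ⟨⟨f₀, hf₀⟩⟩
  obtain ⟨p, hp⟩ := IsCompact.nonempty_iInter_of_directed_nonempty_isCompact_isClosed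
    (fun f : F => dominatedMixtures f.1 S ξ)
    (fun f g => by
      obtain ⟨h, hh, hhf, hhg⟩ := hdir f f.2 g g.2
      exact ⟨⟨h, hh⟩, dominatedMixtures_mono hhf, dominatedMixtures_mono hhg⟩)
    (fun f => dominatedMixtures_nonempty hS.isDist (fun x => (hmem f f.2 x).nonempty)
      (hfD f f.2) (hξ f f.2))
    (fun f => isCompact_dominatedMixtures hS.isDist hS.isClosed (hfD f f.2)
      fun x => (hmem f f.2 x).isClosed)
    (fun f => isClosed_dominatedMixtures hS.isClosed fun x => (hmem f f.2 x).isClosed)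
  exact mem_kleisli_of_mem_dominatedMixtures hS.isDist
    (fun x ν hν => hfD f₀ hf₀ x ν (Set.mem_iInter₂.1 hν f₀ hf₀))
    (isDist_of_mem_kleisli hS.isDist (fun x => (hmem f₀ hf₀ x).nonempty) (hfD f₀ hf₀) (hξ f₀ hf₀))
    (iInter_dominatedMixtures_subset hp)

/-- Scott continuity of Kleisli extension in its function argument:
for a directed family `F` (w.r.t. pointwise reverse inclusion), the Kleisli extension
of the pointwise intersection is the intersection of the Kleisli extensions. -/
theorem kleisli_scott_continuous {X Y : Type*} [Countable X] [Countable Y]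
    (F : Set (X → Set (Option Y → ℝ))) (hne : F.Nonempty)
    (hmem : ∀ f ∈ F, ∀ x, memC (f x))
    (hdir : ∀ f ∈ F, ∀ g ∈ F, ∃ h ∈ F, (∀ x, h x ⊆ f x) ∧ (∀ x, h x ⊆ g x))
    (S : Set (Option X → ℝ)) (hS : memC S) :
    kleisli (fun x : X => ⋂ f ∈ F, f x) S = ⋂ f ∈ F, kleisli f S :=
  kleisli_scott_continuous_general F hne hmem hdir S hS

end DOL
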